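/- arXiv:1908.06421 — 2 statements merged into one kernel-verified Lean document; each statement's English description precedes it below -/
import Mathlib

section
/- On the blow-up $X$ of $\mathbb{P}^1 \times \mathbb{P}^1$ at the two points $(0,0)$ and $(1,1)$ (in the affine coordinates $(x,y)$ on $\mathbb{C} \times \mathbb{C} \subset \mathbb{P}^1 \times \mathbb{P}^1$), the pullbacks of the vector fields $\theta_1 = (x^2 - x)\partial/\partial x$ and $\theta_2 = (y^2 - y)\partial/\partial y$ extend to global holomorphic sections of $T_X$, and at every point $(x,y)$ with $x \notin \{0,1\}$ and $y \notin \{0,1\}$ they form a basis of the tangent space. Hence $T_X$ is generically globally generated. -/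
/- STATEMENT 4: On the blow-up `X` of `ℙ¹ × ℙ¹` at the two points `(0,0)` and `(1,1)`
(affine coordinates `(x,y)`), the vector fields `θ₁ = (x² - x) ∂/∂x` and
`θ₂ = (y² - y) ∂/∂y` lift to global holomorphic sections of `T_X`, and at every point
`(x,y)` with `x ∉ {0,1}`, `y ∉ {0,1}` their values form a basis of the tangent space.
Hence `T_X` is generically globally generated.

A vector field `a(x) ∂/∂x + b(y) ∂/∂y` (with `a`, `b` of degree ≤ 2, so that it is a
global vector field on `ℙ¹ × ℙ¹`; extension over the two points at infinity is expressed
by `ExtendsToInfinity` below) lifts to the blow-up at `(α,β)` iff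
`(1/s)(-a(s+α) t + b(st+β))` is holomorphic in `(s,t)`, where `x = s + α`, `y = st + β`
are the blow-up chart coordinates (`LiftsToBlowupAt` below). -/

/-- The vector field `a(x) ∂/∂x` on ℂ extends holomorphically over `∞ ∈ ℙ¹`:
in the coordinate `w = 1/x` it reads `-w² a(1/w) ∂/∂w`. -/
def ExtendsToInfinity (a : ℂ → ℂ) : Prop :=
  ∃ h : ℂ → ℂ, Differentiable ℂ h ∧ ∀ w : ℂ, w ≠ 0 → h w = -(w ^ 2) * a w⁻¹

/-- The vector field `a(x) ∂/∂x + b(y) ∂/∂y` lifts holomorphically to the blow-up of `ℂ²`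
at `(α, β)`. -/
def LiftsToBlowupAt (a b : ℂ → ℂ) (α β : ℂ) : Prop :=
  ∃ g : ℂ × ℂ → ℂ, Differentiable ℂ g ∧
    ∀ s t : ℂ, s ≠ 0 → g (s, t) = (-(a (s + α)) * t + b (s * t + β)) / s

theorem stmt_4 (a₁ b₁ a₂ b₂ : ℂ → ℂ)
    (ha₁ : a₁ = fun x => x ^ 2 - x) (hb₁ : b₁ = fun _ => 0)
    (ha₂ : a₂ = fun _ => 0) (hb₂ : b₂ = fun y => y ^ 2 - y) :
    -- θ₁, θ₂ are global vector fields on ℙ¹ × ℙ¹ ...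
    (Differentiable ℂ a₁ ∧ ExtendsToInfinity a₁ ∧ Differentiable ℂ b₂ ∧
      ExtendsToInfinity b₂) ∧
    -- ... which lift to the blow-up of ℙ¹ × ℙ¹ at the two points (0,0) and (1,1) ...
    (∀ p : ℂ × ℂ, p = (0, 0) ∨ p = (1, 1) →
      (LiftsToBlowupAt a₁ b₁ p.1 p.2 ∧ LiftsToBlowupAt a₂ b₂ p.1 p.2)) ∧
    -- ... and at every point (x,y) with x ∉ {0,1}, y ∉ {0,1} the values
    -- θ₁ = (x²-x, 0), θ₂ = (0, y²-y) form a basis of the tangent space ℂ²: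
    (∀ x y : ℂ, x ≠ 0 → x ≠ 1 → y ≠ 0 → y ≠ 1 →
      ∀ w : ℂ × ℂ, ∃! c : ℂ × ℂ,
        w = (c.1 * a₁ x + c.2 * a₂ x, c.1 * b₁ y + c.2 * b₂ y)) := by

  subst ha₁ hb₁ ha₂ hb₂
  refine ⟨⟨?_, ⟨fun w => w - 1, ?_, ?_⟩, ?_, ⟨fun w => w - 1, ?_, ?_⟩⟩, ?_, ?_⟩
  · fun_prop
  · fun_prop
  · intro w hw; field_simp; ring
  · fun_prop
  · fun_prop
  · intro w hw; field_simp; ring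
  · rintro p (rfl | rfl)
    · constructor
      · refine ⟨fun p => (1 - p.1) * p.2, by fun_prop, fun s t hs => ?_⟩
        field_simp; ring
      · refine ⟨fun p => p.1 * p.2 ^ 2 - p.2, by fun_prop, fun s t hs => ?_⟩
        field_simp; ring
    · constructor
      · refine ⟨fun p => -(p.1 + 1) * p.2, by fun_prop, fun s t hs => ?_⟩
        field_simp; ring
      · refine ⟨fun p => p.1 * p.2 ^ 2 + p.2, by fun_prop, fun s t hs => ?_⟩
        field_simp; ring
  · intro x y hx0 hx1 hy0 hy1 w
    have hx : x ^ 2 - x ≠ 0 := by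
      intro h; rcases mul_eq_zero.1 (by linear_combination h : x * (x - 1) = 0) with h | h
      · exact hx0 h
      · exact hx1 (by linear_combination h)
    have hy : y ^ 2 - y ≠ 0 := by
      intro h; rcases mul_eq_zero.1 (by linear_combination h : y * (y - 1) = 0) with h | h
      · exact hy0 h
      · exact hy1 (by linear_combination h)
    refine ⟨(w.1 / (x ^ 2 - x), w.2 / (y ^ 2 - y)), ?_, ?_⟩
    · simp only []
      ext <;> simp <;> field_simp
    · rintro ⟨c1, c2⟩ h
      simp only [Prod.ext_iff] at h ⊢
      obtain ⟨h1, h2⟩ := h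
      constructor
      · field_simp [h1]; rw [h1]; ring
      · field_simp [h2]; rw [h2]; ring
end

section
/- Let $\mu = (\mu_{j\bar k \alpha\bar\beta})$ (with $1 \leq j,k \leq n$, $1 \leq \alpha,\beta \leq r$) be a Griffiths semi-positive curvature tensor, i.e., $\sum_{j,k,\alpha,\beta} \mu_{j\bar k\alpha\bar\beta} v^j \bar v^k \xi^\alpha \bar\xi^\beta \geq 0$ for all $v \in \mathbb{C}^n$, $\xi \in \mathbb{C}^r$. If the trace over bundle indices vanishes, $\sum_\alpha \mu_{j\bar k\alpha\bar\alpha} = 0$ for all $j,k$, then $\mu_{j\bar k\alpha\bar\beta} = 0$ for all $j,k,\alpha,\beta$. -/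
/-!
Fix `v ∈ ℂⁿ` and contract the base indices: `A(v)_{αβ} = ∑ μ_{j k̄ α β̄} vʲ v̄ᵏ`. Hermitian symmetry
of `μ` makes `A(v)` a Hermitian matrix, Griffiths semi-positivity makes it positive semidefinite,
and the trace condition gives `tr A(v) = 0`, so `A(v) = 0`. Hence for fixed `α, β` the
sesquilinear form with matrix `(μ_{j k̄ α β̄})_{jk}` vanishes on the diagonal, and complex
polarization forces the matrix itself to vanish.
-/

open scoped ComplexOrder

namespace Matrix

variable {m : Type*} [Fintype m]

theorem dotProduct_mulVec_star_eq_sum {R : Type*} [CommSemiring R] [StarRing R]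
    (M : Matrix m m R) (x : m → R) :
    x ⬝ᵥ M *ᵥ star x = ∑ i, ∑ j, M i j * x i * starRingEnd R (x j) := by
  simp only [dotProduct, mulVec, Finset.mul_sum, Pi.star_apply, starRingEnd_apply]
  exact Finset.sum_congr rfl fun _ _ => Finset.sum_congr rfl fun _ _ => by ring

theorem PosSemidef.of_isHermitian_of_re_nonneg {𝕜 : Type*} [RCLike 𝕜] {A : Matrix m m 𝕜}
    (hA : A.IsHermitian) (hre : ∀ x, 0 ≤ RCLike.re (star x ⬝ᵥ A *ᵥ x)) : A.PosSemidef :=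
  .of_dotProduct_mulVec_nonneg hA fun x =>
    RCLike.nonneg_iff.mpr ⟨hre x, hA.im_star_dotProduct_mulVec_self x⟩

theorem eq_zero_of_forall_star_dotProduct_mulVec_self_eq_zero [DecidableEq m]
    {B : Matrix m m ℂ} (h : ∀ x, star x ⬝ᵥ B *ᵥ x = 0) : B = 0 := by
  refine toEuclideanLin.injective ?_
  rw [map_zero, ← inner_map_self_eq_zero]
  intro x
  rw [EuclideanSpace.inner_eq_star_dotProduct, ofLp_toLpLin, toLin'_apply, dotProduct_comm,
    star_dotProduct, h, star_zero]

end Matrix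

section

variable {m ι : Type*} [Fintype m] (μ : m → m → ι → ι → ℂ)

def contractBase (v : m → ℂ) : Matrix ι ι ℂ :=
  Matrix.of fun α β => ∑ j, ∑ k, μ j k α β * v j * starRingEnd ℂ (v k)

theorem contractBase_isHermitian
    (hherm : ∀ j k α β, μ j k α β = starRingEnd ℂ (μ k j β α)) (v : m → ℂ) :
    (contractBase μ v).IsHermitian := by
  ext α β
  simp only [Matrix.conjTranspose_apply, contractBase, Matrix.of_apply, hherm _ _ β α,
    starRingEnd_apply, star_sum, star_mul', star_star]
  rw [Finset.sum_comm]
  exact Finset.sum_congr rfl fun _ _ => Finset.sum_congr rfl fun _ _ => by ring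

theorem contractBase_posSemidef [Fintype ι]
    (hherm : ∀ j k α β, μ j k α β = starRingEnd ℂ (μ k j β α))
    (hpos : ∀ (v : m → ℂ) (ξ : ι → ℂ),
      0 ≤ (∑ j, ∑ k, ∑ α, ∑ β,
        μ j k α β * v j * starRingEnd ℂ (v k) * ξ α * starRingEnd ℂ (ξ β)).re)
    (v : m → ℂ) : (contractBase μ v).PosSemidef := by
  refine .of_isHermitian_of_re_nonneg (contractBase_isHermitian μ hherm v) fun x => ?_
  obtain ⟨ξ, rfl⟩ := star_involutive.surjective x
  rw [star_star, Matrix.dotProduct_mulVec_star_eq_sum]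
  convert hpos v ξ using 2
  simp only [RCLike.re_to_complex, contractBase, Matrix.of_apply, Finset.sum_mul]
  simp_rw [Finset.sum_comm (s := (Finset.univ : Finset ι)) (t := (Finset.univ : Finset m))]

theorem trace_contractBase [Fintype ι] (htrace : ∀ j k, ∑ α, μ j k α α = 0) (v : m → ℂ) :
    (contractBase μ v).trace = 0 := by
  simp only [Matrix.trace, Matrix.diag, contractBase, Matrix.of_apply]
  rw [Finset.sum_comm]
  refine Finset.sum_eq_zero fun j _ => ?_
  rw [Finset.sum_comm]
  refine Finset.sum_eq_zero fun k _ => ?_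
  rw [← Finset.sum_mul, ← Finset.sum_mul, htrace, zero_mul, zero_mul]

end

theorem stmt_11 (n r : ℕ) (μ : Fin n → Fin n → Fin r → Fin r → ℂ)
    (hherm : ∀ j k α β, μ j k α β = starRingEnd ℂ (μ k j β α))
    (hpos : ∀ (v : Fin n → ℂ) (ξ : Fin r → ℂ),
      0 ≤ (∑ j, ∑ k, ∑ α, ∑ β,
        μ j k α β * v j * starRingEnd ℂ (v k) * ξ α * starRingEnd ℂ (ξ β)).re)
    (htrace : ∀ j k, ∑ α, μ j k α α = 0) :
    μ = 0 := by
  have hcontract : ∀ v, contractBase μ v = 0 := fun v =>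
    (contractBase_posSemidef μ hherm hpos v).trace_eq_zero_iff.mp (trace_contractBase μ htrace v)
  funext j k α β
  have hslice : Matrix.of (fun p q => μ p q α β) = 0 :=
    Matrix.eq_zero_of_forall_star_dotProduct_mulVec_self_eq_zero fun x => by
      obtain ⟨y, rfl⟩ := star_involutive.surjective x
      rw [star_star, Matrix.dotProduct_mulVec_star_eq_sum]
      simpa [contractBase] using congrFun (congrFun (hcontract y) α) β
  exact congrFun (congrFun hslice j) k
end
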